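/- Let p : {1,…,m} → ℝ be strictly positive and log-concave (p(i+1)² ≥ p(i)·p(i+2) for all valid i). Then the discrete Mills' ratio m_d(i) := (∑_{k>i} p(k)) / p(i) is non-increasing in i: for all i < j, m_d(i) ≥ m_d(j). -/
import Mathlib


/-- The discrete Mills' ratio of a positive log-concave vector on `{1,…,m}`
is non-increasing. -/
theorem stmt10 (m : ℕ) (p : ℕ → ℝ)
    (hpos : ∀ i : ℕ, 1 ≤ i → i ≤ m → 0 < p i)
    (hlc : ∀ i : ℕ, 1 ≤ i → i + 2 ≤ m → p i * p (i + 2) ≤ (p (i + 1)) ^ 2) :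
    ∀ i j : ℕ, 1 ≤ i → i < j → j ≤ m →
      (∑ k ∈ Finset.Ioc j m, p k) / p j ≤ (∑ k ∈ Finset.Ioc i m, p k) / p i := by
  -- cross inequality: p i * p (k+1) ≤ p (i+1) * p k for i < k, k+1 ≤ m
  have cross : ∀ i : ℕ, 1 ≤ i → ∀ k : ℕ, i < k → k + 1 ≤ m →
      p i * p (k + 1) ≤ p (i + 1) * p k := by
    intro i hi k
    induction k with
    | zero => omega
    | succ n ih =>
      intro hik hkm
      rcases Nat.lt_or_ge i n with hin | hin
      · -- i < n, use ih and log-concavity at n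
        have h1 : p i * p (n + 1) ≤ p (i + 1) * p n := ih hin (by omega)
        have h2 : p n * p (n + 2) ≤ (p (n + 1)) ^ 2 := hlc n (by omega) (by omega)
        have hpn : 0 < p n := hpos n (by omega) (by omega)
        have hpn1 : 0 < p (n + 1) := hpos (n + 1) (by omega) (by omega)
        have hpi : 0 < p i := hpos i hi (by omega)
        -- p i * p (n+2) * p n ≤ p i * p(n+1)^2 ≤ p(i+1) * p n * p(n+1)
        have key : p i * p (n + 2) * p n ≤ p (i + 1) * p (n + 1) * p n := by
          calc p i * p (n + 2) * p n = p i * (p n * p (n + 2)) := by ring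
            _ ≤ p i * (p (n + 1)) ^ 2 := by
                exact mul_le_mul_of_nonneg_left h2 hpi.le
            _ = (p i * p (n + 1)) * p (n + 1) := by ring
            _ ≤ (p (i + 1) * p n) * p (n + 1) := by
                exact mul_le_mul_of_nonneg_right h1 hpn1.le
            _ = p (i + 1) * p (n + 1) * p n := by ring
        exact le_of_mul_le_mul_right key hpn
      · -- i = n: direct log-concavity
        have : i = n := by omega
        subst this
        have := hlc i hi (by omega)
        calc p i * p (i + 1 + 1) = p i * p (i + 2) := by ring_nf
          _ ≤ (p (i + 1)) ^ 2 := this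
          _ = p (i + 1) * p (i + 1) := by ring
    -- fix calc end below
  -- single step of monotonicity
  have step : ∀ i : ℕ, 1 ≤ i → i + 1 ≤ m →
      (∑ k ∈ Finset.Ioc (i + 1) m, p k) / p (i + 1) ≤
      (∑ k ∈ Finset.Ioc i m, p k) / p i := by
    intro i hi him
    have hpi : 0 < p i := hpos i hi (by omega)
    have hpi1 : 0 < p (i + 1) := hpos (i + 1) (by omega) him
    rw [div_le_div_iff₀ hpi1 hpi]
    -- need: (∑ k ∈ Ioc (i+1) m, p k) * p i ≤ (∑ k ∈ Ioc i m, p k) * p (i+1)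
    have hmap : (Finset.Ioc i (m - 1)).map ⟨(· + 1), add_left_injective 1⟩ =
        Finset.Ioc (i + 1) m := by
      ext x
      simp [Finset.mem_map, Finset.mem_Ioc]
      constructor
      · rintro ⟨a, ⟨h1, h2⟩, rfl⟩; omega
      · intro ⟨h1, h2⟩; exact ⟨x - 1, ⟨by omega, by omega⟩, by omega⟩
    have e1 : ∑ k ∈ Finset.Ioc (i + 1) m, p k = ∑ k ∈ Finset.Ioc i (m - 1), p (k + 1) := by
      rw [← hmap, Finset.sum_map]; rfl
    calc (∑ k ∈ Finset.Ioc (i + 1) m, p k) * p i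
        = ∑ k ∈ Finset.Ioc i (m - 1), p i * p (k + 1) := by
          rw [e1, Finset.sum_mul]; apply Finset.sum_congr rfl; intros; ring
      _ ≤ ∑ k ∈ Finset.Ioc i (m - 1), p (i + 1) * p k := by
          apply Finset.sum_le_sum
          intro k hk
          rw [Finset.mem_Ioc] at hk
          exact cross i hi k hk.1 (by omega)
      _ ≤ ∑ k ∈ Finset.Ioc i m, p (i + 1) * p k := by
          apply Finset.sum_le_sum_of_subset_of_nonneg
          · apply Finset.Ioc_subset_Ioc_right; omega
          · intro k hk _
            rw [Finset.mem_Ioc] at hk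
            exact mul_nonneg hpi1.le (hpos k (by omega) hk.2).le
      _ = (∑ k ∈ Finset.Ioc i m, p k) * p (i + 1) := by
          rw [Finset.sum_mul]; exact Finset.sum_congr rfl fun _ _ => mul_comm _ _
  intro i j hi hij hjm
  induction j with
  | zero => omega
  | succ n ih =>
    rcases Nat.lt_or_ge i n with hin | hin
    · exact le_trans (step n (by omega) hjm) (ih hin (by omega))
    · have : i = n := by omega
      subst this
      exact step i hi hjm
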